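/- Let R = C[x_1,...,x_N] and > a monomial order, and I an ideal of R. If R/in_>(I) is reduced then R/I is reduced. -/
import Mathlib


open MvPolynomial

/-- `d` is the initial (leading) exponent of `f` with respect to the monomial
order `m`. -/
def IsInitial {σ : Type*} (m : MonomialOrder σ) (f : MvPolynomial σ ℂ) (d : σ →₀ ℕ) : Prop :=
  d ∈ f.support ∧ ∀ d' ∈ f.support, m.toSyn d' ≤ m.toSyn d

/-- The initial ideal of `I` with respect to the monomial order `m`. -/
noncomputable def initialIdeal {σ : Type*} (m : MonomialOrder σ)
    (I : Ideal (MvPolynomial σ ℂ)) : Ideal (MvPolynomial σ ℂ) :=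
  Ideal.span {g | ∃ f ∈ I, f ≠ 0 ∧ ∃ d, IsInitial m f d ∧ g = monomial d 1}

namespace Stmt17Aux

set_option maxHeartbeats 1000000
set_option synthInstance.maxHeartbeats 200000

variable {σ : Type*} (m : MonomialOrder σ)

/-- The leading exponent of `f` (junk value `0` for `f = 0`). -/
noncomputable def deg (f : MvPolynomial σ ℂ) : σ →₀ ℕ :=
  m.toSyn.symm (f.support.sup m.toSyn)

lemma toSyn_deg (f : MvPolynomial σ ℂ) : m.toSyn (deg m f) = f.support.sup m.toSyn :=
  m.toSyn.apply_symm_apply _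

lemma isInitial_deg {f : MvPolynomial σ ℂ} (hf : f ≠ 0) : IsInitial m f (deg m f) := by
  obtain ⟨b, hb, hbe⟩ := Finset.exists_mem_eq_sup f.support
    (support_nonempty.mpr hf) m.toSyn
  constructor
  · have : deg m f = b := by rw [deg, hbe, AddEquiv.symm_apply_apply]
    rwa [this]
  · intro d' hd'
    rw [toSyn_deg]
    exact Finset.le_sup hd'

lemma isInitial_unique {f : MvPolynomial σ ℂ} {d d' : σ →₀ ℕ}
    (h : IsInitial m f d) (h' : IsInitial m f d') : d = d' :=
  m.toSyn.injective (le_antisymm (h'.2 d h.1) (h.2 d' h'.1))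

lemma coeff_isInitial_mul {f g : MvPolynomial σ ℂ} {d e : σ →₀ ℕ}
    (hf : IsInitial m f d) (hg : IsInitial m g e) :
    (f * g).coeff (d + e) = f.coeff d * g.coeff e := by
  classical
  rw [coeff_mul]
  apply Finset.sum_eq_single (d, e)
  · rintro ⟨u, v⟩ huv hne
    by_contra hc
    have hu : u ∈ f.support := mem_support_iff.mpr (left_ne_zero_of_mul hc)
    have hv : v ∈ g.support := mem_support_iff.mpr (right_ne_zero_of_mul hc)
    have h1 := hf.2 u hu
    have h2 := hg.2 v hv
    have hsum : u + v = d + e := Finset.HasAntidiagonal.mem_antidiagonal.mp huv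
    have hadd : m.toSyn u + m.toSyn v = m.toSyn d + m.toSyn e := by
      rw [← map_add, ← map_add, hsum]
    have hu' : m.toSyn u = m.toSyn d := by
      rcases h1.lt_or_eq with hlt | heq
      · exact absurd hadd (ne_of_lt (add_lt_add_of_lt_of_le hlt h2))
      · exact heq
    have hv' : m.toSyn v = m.toSyn e := by
      have := hadd
      rw [hu'] at this
      exact add_left_cancel this
    exact hne (Prod.ext (m.toSyn.injective hu') (m.toSyn.injective hv'))
  · intro hni
    exact absurd (Finset.HasAntidiagonal.mem_antidiagonal.mpr (by simp)) hni

lemma IsInitial.mul {f g : MvPolynomial σ ℂ} {d e : σ →₀ ℕ}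
    (hf : IsInitial m f d) (hg : IsInitial m g e) :
    IsInitial m (f * g) (d + e) := by
  classical
  constructor
  · rw [mem_support_iff, coeff_isInitial_mul m hf hg]
    exact mul_ne_zero (mem_support_iff.mp hf.1) (mem_support_iff.mp hg.1)
  · intro u hu
    have := support_mul f g hu
    rw [Finset.mem_add] at this
    obtain ⟨a, ha, b, hb, rfl⟩ := this
    calc m.toSyn (a + b) = m.toSyn a + m.toSyn b := map_add _ _ _
      _ ≤ m.toSyn d + m.toSyn e := add_le_add (hf.2 a ha) (hg.2 b hb)
      _ = m.toSyn (d + e) := (map_add _ _ _).symm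

lemma isInitial_pow {f : MvPolynomial σ ℂ} (hf : f ≠ 0) (n : ℕ) :
    IsInitial m (f ^ (n + 1)) ((n + 1) • deg m f) := by
  induction n with
  | zero => simpa using isInitial_deg m hf
  | succ n ih =>
    have h := IsInitial.mul m ih (isInitial_deg m hf)
    rw [← pow_succ] at h
    rwa [succ_nsmul]

lemma initialIdeal_eq (I : Ideal (MvPolynomial σ ℂ)) : initialIdeal m I =
    Ideal.span ((fun d => monomial d (1 : ℂ)) ''
      {d | ∃ f ∈ I, f ≠ 0 ∧ IsInitial m f d}) := by
  unfold initialIdeal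
  congr 1
  ext g
  simp only [Set.mem_setOf_eq, Set.mem_image]
  constructor
  · rintro ⟨f, hf, hf0, d, hd, rfl⟩
    exact ⟨d, ⟨f, hf, hf0, hd⟩, rfl⟩
  · rintro ⟨d, ⟨f, hf, hf0, hd⟩, rfl⟩
    exact ⟨f, hf, hf0, d, hd, rfl⟩

lemma mem_of_pow_mem (I : Ideal (MvPolynomial σ ℂ))
    (h : IsReduced (MvPolynomial σ ℂ ⧸ initialIdeal m I)) :
    ∀ f : MvPolynomial σ ℂ, (∃ k : ℕ, f ^ (k + 1) ∈ I) → f ∈ I := by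
  classical
  have H : ∀ s : m.syn, ∀ f : MvPolynomial σ ℂ, m.toSyn (deg m f) = s →
      (∃ k : ℕ, f ^ (k + 1) ∈ I) → f ∈ I := by
    intro s
    induction s using WellFoundedLT.induction with
    | _ s ih =>
      rintro f hfs ⟨k, hk⟩
      by_cases hf0 : f = 0
      · simp [hf0]
      have hfk0 : f ^ (k + 1) ≠ 0 := pow_ne_zero _ hf0
      have h1 : (monomial ((k + 1) • deg m f) (1 : ℂ)) ∈ initialIdeal m I :=
        Ideal.subset_span ⟨f ^ (k + 1), hk, hfk0, _, isInitial_pow m hf0 k, rfl⟩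
      have h2 : (monomial (deg m f) (1 : ℂ)) ∈ initialIdeal m I := by
        have hnil : IsNilpotent
            (Ideal.Quotient.mk (initialIdeal m I) (monomial (deg m f) (1 : ℂ))) := by
          refine ⟨k + 1, ?_⟩
          rw [← map_pow, monomial_pow, one_pow, Ideal.Quotient.eq_zero_iff_mem]
          exact h1
        have := h.eq_zero _ hnil
        rwa [Ideal.Quotient.eq_zero_iff_mem] at this
      rw [initialIdeal_eq, mem_ideal_span_monomial_image] at h2
      obtain ⟨d, ⟨g, hgI, hg0, hgd⟩, hdle⟩ := h2 (deg m f) (by simp [support_monomial])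
      set e := deg m f - d with he
      have hed : e + d = deg m f := tsub_add_cancel_of_le hdle
      have hgd0 : g.coeff d ≠ 0 := mem_support_iff.mp hgd.1
      set c := f.coeff (deg m f) / g.coeff d with hc
      have hc0 : c ≠ 0 :=
        div_ne_zero (mem_support_iff.mp (isInitial_deg m hf0).1) hgd0
      set q := monomial e c * g with hq
      have hqI : q ∈ I := I.mul_mem_left _ hgI
      have hcoeffq : q.coeff (deg m f) = f.coeff (deg m f) := by
        have hcm : q.coeff (e + d) = c * g.coeff d := coeff_monomial_mul d e c g
        rw [hed] at hcm
        rw [hcm, hc, div_mul_cancel₀ _ hgd0]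
      have hmono : IsInitial m (monomial e c) e := by
        constructor
        · simp [support_monomial, hc0]
        · intro d' hd'
          simp only [support_monomial, hc0, if_false, Finset.mem_singleton] at hd'
          exact le_of_eq (congrArg _ hd')
      have hqinit : IsInitial m q (deg m f) := by
        rw [← hed]
        exact IsInitial.mul m hmono hgd
      set h' := f - q with hh'
      have hfh : f = h' + q := by rw [hh', sub_add_cancel]
      have hbound : ∀ u ∈ h'.support, m.toSyn u < m.toSyn (deg m f) := by
        intro u hu
        have hune : u ≠ deg m f := by
          intro heq
          have hcz : h'.coeff u = 0 := by
            rw [heq, hh', coeff_sub, hcoeffq, sub_self]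
          exact mem_support_iff.mp hu hcz
        have hle : m.toSyn u ≤ m.toSyn (deg m f) := by
          rcases Finset.mem_union.mp (support_sub σ f q hu) with hmem | hmem
          · exact (isInitial_deg m hf0).2 u hmem
          · exact hqinit.2 u hmem
        exact lt_of_le_of_ne hle (fun heq => hune (m.toSyn.injective heq))
      by_cases hh0 : h' = 0
      · have : f = q := by rw [hfh, hh0, zero_add]
        rw [this]; exact hqI
      · have hdlt : m.toSyn (deg m h') < s := by
          rw [← hfs]
          exact hbound _ (isInitial_deg m hh0).1
        have hh'pow : ∃ k : ℕ, h' ^ (k + 1) ∈ I := by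
          refine ⟨k, ?_⟩
          have hmkeq : Ideal.Quotient.mk I h' = Ideal.Quotient.mk I f := by
            rw [hh', map_sub, Ideal.Quotient.eq_zero_iff_mem.mpr hqI, sub_zero]
          rw [← Ideal.Quotient.eq_zero_iff_mem, map_pow, hmkeq, ← map_pow,
            Ideal.Quotient.eq_zero_iff_mem]
          exact hk
        have hh'I : h' ∈ I := ih _ hdlt h' rfl hh'pow
        rw [hfh]
        exact I.add_mem hh'I hqI
  intro f
  exact H _ f rfl

end Stmt17Aux

set_option maxHeartbeats 1000000
set_option synthInstance.maxHeartbeats 200000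

/-- If `R/in(I)` is reduced, then `R/I` is reduced. -/
theorem stmt17 (N : ℕ) (m : MonomialOrder (Fin N)) (I : Ideal (MvPolynomial (Fin N) ℂ))
    (h : IsReduced (MvPolynomial (Fin N) ℂ ⧸ initialIdeal m I)) :
    IsReduced (MvPolynomial (Fin N) ℂ ⧸ I) := by
  constructor
  rintro x ⟨n, hn⟩
  obtain ⟨f, rfl⟩ := Ideal.Quotient.mk_surjective x
  cases n with
  | zero =>
    have h1 : (1 : MvPolynomial (Fin N) ℂ ⧸ I) = 0 := by simpa using hn
    calc Ideal.Quotient.mk I f = Ideal.Quotient.mk I f * 1 := (mul_one _).symm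
      _ = Ideal.Quotient.mk I f * 0 := by rw [h1]
      _ = 0 := mul_zero _
  | succ n =>
    rw [Ideal.Quotient.eq_zero_iff_mem]
    refine Stmt17Aux.mem_of_pow_mem m I h f ⟨n, ?_⟩
    rw [← Ideal.Quotient.eq_zero_iff_mem, map_pow]
    exact hn
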